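/- arXiv:2402.02396 — 2 statements merged into one kernel-verified Lean document; each statement's English description precedes it below -/
import Mathlib

section
/- Let (λ_{n,d})_{n≥1} be non-increasing nonnegative reals for each d satisfying sup_d (Σ_{n=L}^∞ λ_{n,d}^τ)^{1/τ} = M < ∞ for some τ > 0 and L ∈ ℕ. Define n_ABS(ε,d) = min{n ∈ ℕ₀ : √(λ_{n+1,d}) ≤ ε}. Then there exists a constant C ≥ 0 (depending only on M, L, τ) such that n_ABS(ε,d) ≤ C·ε^(-2τ) for all ε ∈ (0,1) and all d ∈ ℕ. -/
/-- Sufficiency direction of Woźniakowski's SPT criterion: uniform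
τ-summability of eigenvalue tails implies n_ABS(ε,d) ≤ C ε^{-2τ}. -/
theorem stmt4 (lam : ℕ → ℕ → ℝ)
    (hmono : ∀ d, ∀ m n : ℕ, m ≤ n → lam n d ≤ lam m d)
    (hnonneg : ∀ n d, 0 ≤ lam n d)
    (τ M : ℝ) (hτ : 0 < τ) (L : ℕ) (hL : 1 ≤ L)
    (hsum : ∀ d, Summable (fun n : ℕ => lam (L + n) d ^ τ))
    (hM : ∀ d, (∑' n : ℕ, lam (L + n) d ^ τ) ^ (1 / τ) ≤ M) :
    ∃ C : ℝ, 0 ≤ C ∧ ∀ ε : ℝ, 0 < ε → ε < 1 → ∀ d : ℕ,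
      ((sInf {n : ℕ | Real.sqrt (lam (n + 1) d) ≤ ε} : ℕ) : ℝ) ≤
        C * ε ^ (-(2 * τ)) := by
  have hMnn : 0 ≤ M := le_trans (Real.rpow_nonneg
    (tsum_nonneg fun n => Real.rpow_nonneg (hnonneg _ _) τ) _) (hM 0)
  -- key tail bound: (n+1) * lam(L+n,d)^τ ≤ M^τ
  have key : ∀ d n : ℕ, (n + 1 : ℝ) * lam (L + n) d ^ τ ≤ M ^ τ := by
    intro d n
    have hts : (∑' k : ℕ, lam (L + k) d ^ τ) ≤ M ^ τ := by
      have h1 : ((∑' k : ℕ, lam (L + k) d ^ τ) ^ (1 / τ)) ^ τ ≤ M ^ τ :=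
        Real.rpow_le_rpow (Real.rpow_nonneg
          (tsum_nonneg fun n => Real.rpow_nonneg (hnonneg _ _) τ) _) (hM d) hτ.le
      rwa [← Real.rpow_mul
        (tsum_nonneg fun n => Real.rpow_nonneg (hnonneg _ _) τ),
        one_div_mul_cancel hτ.ne', Real.rpow_one] at h1
    have hfin : (∑ k ∈ Finset.range (n + 1), lam (L + k) d ^ τ)
        ≤ ∑' k : ℕ, lam (L + k) d ^ τ :=
      Summable.sum_le_tsum _ (fun k _ => Real.rpow_nonneg (hnonneg _ _) τ) (hsum d)
    have hlow : (Finset.range (n + 1)).card • (lam (L + n) d ^ τ)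
        ≤ ∑ k ∈ Finset.range (n + 1), lam (L + k) d ^ τ := by
      refine Finset.card_nsmul_le_sum _ _ _ fun k hk => ?_
      exact Real.rpow_le_rpow (hnonneg _ _)
        (hmono d (L + k) (L + n) (by simp at hk; omega)) hτ.le
    rw [Finset.card_range, nsmul_eq_mul] at hlow
    push_cast at hlow
    linarith
  refine ⟨(L : ℝ) + 1 + M ^ τ, by positivity, fun ε hε hε1 d => ?_⟩
  set n : ℕ := ⌈M ^ τ * ε ^ (-(2 * τ))⌉₊ with hn
  have hεp : (0 : ℝ) < ε ^ (2 * τ) := Real.rpow_pos_of_pos hε _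
  have hεneg : (0 : ℝ) < ε ^ (-(2 * τ)) := Real.rpow_pos_of_pos hε _
  have hxnn : 0 ≤ M ^ τ * ε ^ (-(2 * τ)) := by positivity
  have hceil : M ^ τ * ε ^ (-(2 * τ)) ≤ (n : ℝ) := Nat.le_ceil _
  -- membership: √(lam (L - 1 + n + 1)) ≤ ε
  have hmem : (L - 1 + n) ∈ {m : ℕ | Real.sqrt (lam (m + 1) d) ≤ ε} := by
    have hidx : L - 1 + n + 1 = L + n := by omega
    have hkey := key d n
    have hMτ : M ^ τ ≤ ((n : ℝ) + 1) * ε ^ (2 * τ) := by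
      have : M ^ τ * ε ^ (-(2 * τ)) * ε ^ (2 * τ) ≤ ((n : ℝ) + 1) * ε ^ (2 * τ) :=
        mul_le_mul_of_nonneg_right (le_trans hceil (by linarith)) hεp.le
      rwa [mul_assoc, ← Real.rpow_add hε, neg_add_cancel, Real.rpow_zero,
        mul_one] at this
    have hlam : lam (L + n) d ^ τ ≤ (ε ^ (2 : ℝ)) ^ τ := by
      have h2 : ((n : ℝ) + 1) * lam (L + n) d ^ τ ≤ ((n : ℝ) + 1) * ε ^ (2 * τ) :=
        le_trans hkey hMτ
      have h3 : lam (L + n) d ^ τ ≤ ε ^ (2 * τ) :=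
        le_of_mul_le_mul_left h2 (by positivity)
      rwa [Real.rpow_mul hε.le] at h3
    have hlam2 : lam (L + n) d ≤ ε ^ 2 := by
      have := (Real.rpow_le_rpow_iff (hnonneg _ _)
        (Real.rpow_nonneg hε.le _) hτ).mp hlam
      rwa [show (2 : ℝ) = ((2 : ℕ) : ℝ) by norm_num, Real.rpow_natCast] at this
    simp only [Set.mem_setOf_eq, hidx]
    calc Real.sqrt (lam (L + n) d) ≤ Real.sqrt (ε ^ 2) := Real.sqrt_le_sqrt hlam2
      _ = ε := by rw [Real.sqrt_sq hε.le]
  have hinf : sInf {m : ℕ | Real.sqrt (lam (m + 1) d) ≤ ε} ≤ L - 1 + n :=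
    Nat.sInf_le hmem
  have hcast : ((L - 1 + n : ℕ) : ℝ) ≤ (L : ℝ) + (n : ℝ) := by
    calc ((L - 1 + n : ℕ) : ℝ) ≤ ((L + n : ℕ) : ℝ) :=
          Nat.cast_le.mpr (by omega)
      _ = (L : ℝ) + (n : ℝ) := by push_cast; ring
  have hnb : (n : ℝ) ≤ M ^ τ * ε ^ (-(2 * τ)) + 1 := (Nat.ceil_lt_add_one hxnn).le
  have hone : (1 : ℝ) ≤ ε ^ (-(2 * τ)) :=
    Real.one_le_rpow_of_pos_of_le_one_of_nonpos hε hε1.le (by linarith)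
  calc ((sInf {m : ℕ | Real.sqrt (lam (m + 1) d) ≤ ε} : ℕ) : ℝ)
      ≤ ((L - 1 + n : ℕ) : ℝ) := by exact_mod_cast hinf
    _ ≤ (L : ℝ) + (n : ℝ) := hcast
    _ ≤ (L : ℝ) + (M ^ τ * ε ^ (-(2 * τ)) + 1) := by linarith
    _ ≤ ((L : ℝ) + 1 + M ^ τ) * ε ^ (-(2 * τ)) := by
        have h1 : (L : ℝ) ≤ (L : ℝ) * ε ^ (-(2 * τ)) :=
          le_mul_of_one_le_right (by positivity) hone
        nlinarith [Real.rpow_nonneg hMnn τ]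
end

section
/- Let (a_j) be positive reals with a₁ = min a_j, and suppose there exist constants j* ∈ ℕ, δ > 0, B ≥ 0 such that for all real ℓ ≥ ⌊a₁⌋, the number of h ∈ ℤ^d with Σ_{j=1}^d a_j|h_j|^{b_j} < ℓ+1 is at most 3^{j*}·a₁^{-B}·(ℓ+1)^{B + (log 3)/δ}. Then for p > B + (log 3)/δ + 1, the sum Σ_{h∈ℤ^d\{0}} (Σ_{j=1}^d a_j|h_j|^{b_j})^{-p} is bounded above by 3^{j*}·a₁^{-B}·Σ_{ℓ=⌊a₁⌋}^∞ (ℓ+1)^{B+(log 3)/δ}/max{a₁,ℓ}^p, which is finite and independent of d. -/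
open Real Filter

/-- Level-set decomposition plus the Dick–Kritzer–Pillichshammer–Woźniakowski
counting bound yields, for p > B + (log 3)/δ + 1, a d-independent finite bound
for Σ_{h≠0} (Σ_j a_j|h_j|^{b_j})^{-p}. -/
theorem stmt13 (a b : ℕ → ℝ) (ha : ∀ j, 0 < a j) (hmin : ∀ j, a 0 ≤ a j)
    (d jstar : ℕ) (δ B : ℝ) (hδ : 0 < δ) (hB : 0 ≤ B)
    (hcount : ∀ ℓ : ℝ, (Nat.floor (a 0) : ℝ) ≤ ℓ →
      (Set.ncard {h : Fin d → ℤ |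
          ∑ j : Fin d, a j.1 * |(h j : ℝ)| ^ (b j.1) < ℓ + 1} : ℝ)
        ≤ (3 : ℝ) ^ jstar * a 0 ^ (-B) * (ℓ + 1) ^ (B + Real.log 3 / δ))
    (p : ℝ) (hp : B + Real.log 3 / δ + 1 < p) :
    Summable (fun k : ℕ =>
      ((Nat.floor (a 0) : ℝ) + k + 1) ^ (B + Real.log 3 / δ) /
        max (a 0) ((Nat.floor (a 0) : ℝ) + k) ^ p) ∧
    ∑' h : {h : Fin d → ℤ // h ≠ 0},
        (∑ j : Fin d, a j.1 * |(h.1 j : ℝ)| ^ (b j.1)) ^ (-p)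
      ≤ (3 : ℝ) ^ jstar * a 0 ^ (-B) *
          ∑' k : ℕ,
            ((Nat.floor (a 0) : ℝ) + k + 1) ^ (B + Real.log 3 / δ) /
              max (a 0) ((Nat.floor (a 0) : ℝ) + k) ^ p := by
  have ha0 : 0 < a 0 := ha 0
  set m : ℕ := Nat.floor (a 0) with hm
  set α : ℝ := B + Real.log 3 / δ with hα
  have hlog3 : (0:ℝ) < Real.log 3 := Real.log_pos (by norm_num)
  have hα0 : 0 ≤ α := by
    have : 0 < Real.log 3 / δ := div_pos hlog3 hδ
    simp only [hα]; linarith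
  have hp0 : 0 < p := by linarith
  have hp1 : 1 < p - α := by linarith
  set C : ℝ := (3 : ℝ) ^ jstar * a 0 ^ (-B) with hC
  have hC0 : 0 < C := by
    apply mul_pos (pow_pos (by norm_num) _) (Real.rpow_pos_of_pos ha0 _)
  set T : ℕ → ℝ := fun k => ((m:ℝ) + k + 1) ^ α / max (a 0) ((m:ℝ) + k) ^ p with hT
  have hmaxpos : ∀ k : ℕ, 0 < max (a 0) ((m:ℝ) + k) :=
    fun k => lt_of_lt_of_le ha0 (le_max_left _ _)
  have hTnn : ∀ k, 0 ≤ T k := fun k =>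
    div_nonneg (Real.rpow_nonneg (by positivity) _) (Real.rpow_nonneg (hmaxpos k).le _)
  -- Part 1 : summability of T
  set c : ℝ := min (a 0) (1/2) with hc
  have hc0 : 0 < c := lt_min ha0 (by norm_num)
  have hsum1 : Summable T := by
    have hbase : Summable (fun k : ℕ => ((m:ℝ)+1) ^ α / c ^ p * ((k:ℝ)+1) ^ (α - p)) := by
      apply Summable.mul_left
      have : Summable (fun n : ℕ => 1 / ((n:ℝ)) ^ (p - α)) :=
        Real.summable_one_div_nat_rpow.mpr hp1
      have h2 := (summable_nat_add_iff 1).mpr this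
      apply h2.congr
      intro n
      push_cast
      rw [one_div, ← Real.rpow_neg (by positivity), neg_sub]
    apply Summable.of_nonneg_of_le hTnn _ hbase
    intro k
    have hk1 : (0:ℝ) < (k:ℝ) + 1 := by positivity
    have hnum : ((m:ℝ) + k + 1) ^ α ≤ ((m:ℝ)+1) ^ α * ((k:ℝ)+1) ^ α := by
      rw [← Real.mul_rpow (by positivity) (by positivity)]
      apply Real.rpow_le_rpow (by positivity) _ hα0
      nlinarith [(Nat.cast_nonneg m : (0:ℝ) ≤ m), (Nat.cast_nonneg k : (0:ℝ) ≤ k)]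
    have hden : c * ((k:ℝ)+1) ≤ max (a 0) ((m:ℝ) + k) := by
      rcases Nat.eq_zero_or_pos k with hk | hk
      · subst hk
        simp only [Nat.cast_zero, zero_add, add_zero, mul_one]
        calc c ≤ a 0 := min_le_left _ _
          _ ≤ _ := le_max_left _ _
      · have hck : c * ((k:ℝ)+1) ≤ (1/2) * ((k:ℝ)+1) :=
          mul_le_mul_of_nonneg_right (min_le_right _ _) (by positivity)
        have h1k : (1:ℝ) ≤ (k:ℝ) := by exact_mod_cast hk
        calc c * ((k:ℝ)+1) ≤ (1/2) * ((k:ℝ)+1) := hck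
          _ ≤ (k:ℝ) := by linarith
          _ ≤ (m:ℝ) + k := by
              have : (0:ℝ) ≤ (m:ℝ) := Nat.cast_nonneg m
              linarith
          _ ≤ _ := le_max_right _ _
    calc T k ≤ (((m:ℝ)+1) ^ α * ((k:ℝ)+1) ^ α) / (c * ((k:ℝ)+1)) ^ p := by
          apply div_le_div₀ (by positivity) hnum (Real.rpow_pos_of_pos (by positivity) _)
          exact Real.rpow_le_rpow (by positivity) hden hp0.le
      _ = ((m:ℝ)+1) ^ α / c ^ p * ((k:ℝ)+1) ^ (α - p) := by
          rw [Real.mul_rpow hc0.le hk1.le, Real.rpow_sub hk1]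
          field_simp
  refine ⟨hsum1, ?_⟩
  -- Part 2
  set S : (Fin d → ℤ) → ℝ := fun h => ∑ j : Fin d, a j.1 * |(h j : ℝ)| ^ (b j.1) with hS
  set f : {h : Fin d → ℤ // h ≠ 0} → ℝ := fun x => S x.1 ^ (-p) with hf
  have hSnn : ∀ h, 0 ≤ S h := fun h =>
    Finset.sum_nonneg fun j _ => mul_nonneg (ha _).le (Real.rpow_nonneg (abs_nonneg _) _)
  by_cases hsf : Summable f
  swap
  · rw [tsum_eq_zero_of_not_summable hsf]
    exact mul_nonneg hC0.le (tsum_nonneg hTnn)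
  -- key : every nonzero h has S h ≥ a 0
  have key : ∀ x : {h : Fin d → ℤ // h ≠ 0}, a 0 ≤ S x.1 := by
    by_contra hk
    push_neg at hk
    obtain ⟨x0, hx0⟩ := hk
    obtain ⟨j, hj⟩ : ∃ j : Fin d, x0.1 j ≠ 0 := Function.ne_iff.mp x0.2
    set t : ℝ := |(x0.1 j : ℝ)| with htdef
    have ht1 : (1:ℝ) ≤ t := by
      have : (1:ℤ) ≤ |x0.1 j| := Int.one_le_abs hj
      calc (1:ℝ) ≤ ((|x0.1 j| : ℤ) : ℝ) := by exact_mod_cast this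
        _ = t := by push_cast; rfl
    have hterm : a j.1 * t ^ (b j.1) ≤ S x0.1 := by
      have := Finset.single_le_sum
        (f := fun i : Fin d => a i.1 * |(x0.1 i : ℝ)| ^ (b i.1))
        (fun i _ => mul_nonneg (ha _).le (Real.rpow_nonneg (abs_nonneg _) _))
        (Finset.mem_univ j)
      exact this
    have htb : t ^ (b j.1) < 1 := by
      have h1 : a j.1 * t ^ (b j.1) < a j.1 := lt_of_le_of_lt hterm
        (lt_of_lt_of_le hx0 (hmin _))
      nlinarith [ha j.1, Real.rpow_nonneg (abs_nonneg ((x0.1 j : ℝ))) (b j.1)]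
    have htgt : 1 < t := by
      rcases ht1.lt_or_eq with h | h
      · exact h
      · exfalso; rw [← h, Real.one_rpow] at htb; exact lt_irrefl 1 htb
    have hbj : b j.1 < 0 := by
      by_contra hb
      push_neg at hb
      exact absurd (Real.one_le_rpow ht1 hb) (not_le.mpr htb)
    -- construct infinitely many points with f ≥ ε
    have habs2 : 2 ≤ (x0.1 j).natAbs := by
      by_contra hh
      push_neg at hh
      interval_cases h : (x0.1 j).natAbs
      · exact hj (Int.natAbs_eq_zero.mp h)
      · have : t = 1 := by
          rw [htdef, ← Int.cast_abs, Int.abs_eq_natAbs, h]; norm_num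
        rw [this] at htgt; exact lt_irrefl 1 htgt
    set w : ℕ → Fin d → ℤ := fun n i => if i = j then (x0.1 j) ^ (n + 1) else 0 with hw
    have hwne : ∀ n, w n ≠ 0 := by
      intro n hzero
      have h' := congrFun hzero j
      simp only [hw, if_pos rfl, Pi.zero_apply] at h'
      exact pow_ne_zero (n+1) hj h'
    set g : ℕ → {h : Fin d → ℤ // h ≠ 0} := fun n => ⟨w n, hwne n⟩ with hg
    have hginj : Function.Injective g := by
      intro n1 n2 hgn
      have h1 : (x0.1 j) ^ (n1 + 1) = (x0.1 j) ^ (n2 + 1) := by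
        have h2 := congrFun (congrArg Subtype.val hgn) j
        simpa [hg, hw] using h2
      have h2 : (x0.1 j).natAbs ^ (n1 + 1) = (x0.1 j).natAbs ^ (n2 + 1) := by
        rw [← Int.natAbs_pow, ← Int.natAbs_pow, h1]
      have := Nat.pow_right_injective habs2 h2
      omega
    -- value of S on g n
    have hSg : ∀ n : ℕ, S (g n).1 =
        a j.1 * (t ^ (n+1)) ^ (b j.1) + ∑ i ∈ Finset.univ.erase j, a i.1 * |(0:ℝ)| ^ (b i.1) := by
      intro n
      show (∑ i : Fin d, a i.1 * |((w n i : ℤ) : ℝ)| ^ (b i.1)) = _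
      rw [← Finset.add_sum_erase _ _ (Finset.mem_univ j)]
      congr 1
      · show a j.1 * |((if j = j then (x0.1 j) ^ (n+1) else 0 : ℤ) : ℝ)| ^ (b j.1) = _
        rw [if_pos rfl]
        congr 2
        push_cast
        rw [abs_pow]
      · apply Finset.sum_congr rfl
        intro i hi
        have hij : i ≠ j := (Finset.mem_erase.mp hi).1
        show a i.1 * |((if i = j then (x0.1 j) ^ (n+1) else 0 : ℤ) : ℝ)| ^ (b i.1) = _
        rw [if_neg hij]
        norm_num
    have htpow : ∀ n : ℕ, (1:ℝ) ≤ t ^ (n+1) := fun n => one_le_pow₀ ht1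
    have hSgpos : ∀ n : ℕ, 0 < S (g n).1 := by
      intro n
      rw [hSg n]
      have h1 : 0 < a j.1 * (t ^ (n+1)) ^ (b j.1) :=
        mul_pos (ha _) (Real.rpow_pos_of_pos (lt_of_lt_of_le one_pos (htpow n)) _)
      have h2 : 0 ≤ ∑ i ∈ Finset.univ.erase j, a i.1 * |(0:ℝ)| ^ (b i.1) :=
        Finset.sum_nonneg fun i _ => mul_nonneg (ha _).le (Real.rpow_nonneg (abs_nonneg _) _)
      linarith
    have hSgle : ∀ n : ℕ, S (g n).1 ≤ S (g 0).1 := by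
      intro n
      rw [hSg n, hSg 0]
      have : (t ^ (n+1)) ^ (b j.1) ≤ (t ^ (0+1)) ^ (b j.1) := by
        apply Real.rpow_le_rpow_of_nonpos (by positivity) _ hbj.le
        exact pow_le_pow_right₀ ht1 (by omega)
      have := mul_le_mul_of_nonneg_left this (ha j.1).le
      linarith
    set ε : ℝ := S (g 0).1 ^ (-p) with hε
    have hε0 : 0 < ε := Real.rpow_pos_of_pos (hSgpos 0) _
    have hεle : ∀ n : ℕ, ε ≤ f (g n) := by
      intro n
      exact Real.rpow_le_rpow_of_nonpos (hSgpos n) (hSgle n) (by linarith)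
    have hfin : {x : {h : Fin d → ℤ // h ≠ 0} | ¬ f x < ε}.Finite := by
      have := hsf.tendsto_cofinite_zero.eventually (gt_mem_nhds hε0)
      exact Filter.eventually_cofinite.mp this
    have hinf : {x : {h : Fin d → ℤ // h ≠ 0} | ¬ f x < ε}.Infinite :=
      Set.infinite_of_injective_forall_mem hginj (fun n => not_lt.mpr (hεle n))
    exact hinf hfin
  -- level decomposition
  set K : {h : Fin d → ℤ // h ≠ 0} → ℕ := fun x => Nat.floor (S x.1) - m with hK
  have hfloor : ∀ x : {h : Fin d → ℤ // h ≠ 0}, m ≤ Nat.floor (S x.1) :=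
    fun x => Nat.floor_le_floor (key x)
  have hSpos : ∀ x : {h : Fin d → ℤ // h ≠ 0}, 0 < S x.1 :=
    fun x => lt_of_lt_of_le ha0 (key x)
  -- per-fiber bounds
  have fiber_bound : ∀ k : ℕ, ∑' x : (K ⁻¹' {k} : Set _), f x ≤ C * T k := by
    intro k
    have hlev : ∀ x : {h : Fin d → ℤ // h ≠ 0}, K x = k →
        ((m:ℝ) + k ≤ S x.1 ∧ S x.1 < (m:ℝ) + k + 1) := by
      intro x hx
      have hfl : Nat.floor (S x.1) = m + k := by
        have := hfloor x
        simp only [hK] at hx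
        omega
      constructor
      · have h1 : ((m + k : ℕ) : ℝ) ≤ S x.1 := by
          rw [← hfl]; exact Nat.floor_le (hSnn _)
        push_cast at h1; linarith
      · have h2 : S x.1 < ((m + k : ℕ) : ℝ) + 1 := by
          rw [← hfl]; exact Nat.lt_floor_add_one _
        push_cast at h2; linarith
    set εk : ℝ := ((m:ℝ) + k + 1) ^ (-p) with hεk
    have hεk0 : 0 < εk := Real.rpow_pos_of_pos (by positivity) _
    have hbig : {x : {h : Fin d → ℤ // h ≠ 0} | ¬ f x < εk}.Finite := by
      have := hsf.tendsto_cofinite_zero.eventually (gt_mem_nhds hεk0)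
      exact Filter.eventually_cofinite.mp this
    have hfibsub : (K ⁻¹' {k} : Set _) ⊆ {x | ¬ f x < εk} := by
      intro x hx
      have hx' : K x = k := hx
      obtain ⟨_, h2⟩ := hlev x hx'
      have : εk ≤ f x :=
        Real.rpow_le_rpow_of_nonpos (hSpos x) h2.le (by linarith)
      exact not_lt.mpr this
    have hfibfin : (K ⁻¹' {k} : Set _).Finite := hbig.subset hfibsub
    -- ambient sublevel set
    set E : Set (Fin d → ℤ) := {h : Fin d → ℤ |
        ∑ j : Fin d, a j.1 * |(h j : ℝ)| ^ (b j.1) < ((m:ℝ) + k) + 1} with hE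
    have hEfin : E.Finite := by
      apply Set.Finite.subset ((hbig.image Subtype.val).insert 0)
      intro h hh
      rcases eq_or_ne h 0 with h0 | h0
      · exact Set.mem_insert_iff.mpr (Or.inl h0)
      · apply Set.mem_insert_iff.mpr; right
        refine ⟨⟨h, h0⟩, ?_, rfl⟩
        have hhE : S h < (m:ℝ) + k + 1 := by
          have : S h < ((m:ℝ) + k) + 1 := hh
          linarith
        have : εk ≤ f ⟨h, h0⟩ :=
          Real.rpow_le_rpow_of_nonpos (hSpos ⟨h, h0⟩) hhE.le (by linarith)
        exact not_lt.mpr this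
    have hcard : ((K ⁻¹' {k} : Set _).ncard : ℝ) ≤ (E.ncard : ℝ) := by
      have hsub : Subtype.val '' (K ⁻¹' {k} : Set _) ⊆ E := by
        rintro h ⟨x, hx, rfl⟩
        have hx' : K x = k := hx
        obtain ⟨_, h2⟩ := hlev x hx'
        show S x.1 < ((m:ℝ) + k) + 1
        linarith
      have := Set.ncard_le_ncard hsub hEfin
      rw [Set.ncard_image_of_injective _ Subtype.val_injective] at this
      exact_mod_cast this
    have hEcount : (E.ncard : ℝ) ≤ C * ((m:ℝ) + k + 1) ^ α := by
      have hle : (m:ℝ) ≤ (m:ℝ) + k := by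
        have : (0:ℝ) ≤ (k:ℝ) := Nat.cast_nonneg k
        linarith
      have h2 := hcount ((m:ℝ) + k) hle
      rw [hE]
      exact h2
    -- bound the fiber tsum
    have hbound : ∀ x : {h : Fin d → ℤ // h ≠ 0}, K x = k →
        f x ≤ (max (a 0) ((m:ℝ) + k)) ^ (-p) := by
      intro x hx
      obtain ⟨h1, _⟩ := hlev x hx
      exact Real.rpow_le_rpow_of_nonpos (hmaxpos k) (max_le (key x) h1) (by linarith)
    haveI := hfibfin.fintype
    rw [tsum_fintype]
    calc ∑ x : (K ⁻¹' {k} : Set _), f x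
        ≤ (Finset.univ : Finset (K ⁻¹' {k} : Set _)).card •
            ((max (a 0) ((m:ℝ) + k)) ^ (-p)) := by
          apply Finset.sum_le_card_nsmul
          intro x _
          exact hbound x.1 x.2
      _ = ((K ⁻¹' {k} : Set _).ncard : ℝ) * ((max (a 0) ((m:ℝ) + k)) ^ (-p)) := by
          rw [nsmul_eq_mul, Finset.card_univ, ← Nat.card_eq_fintype_card,
            Nat.card_coe_set_eq]
      _ ≤ (C * ((m:ℝ) + k + 1) ^ α) * ((max (a 0) ((m:ℝ) + k)) ^ (-p)) := by
          apply mul_le_mul_of_nonneg_right (le_trans hcard hEcount)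
            (Real.rpow_nonneg (hmaxpos k).le _)
      _ = C * T k := by
          rw [hT, Real.rpow_neg (hmaxpos k).le]
          ring
  -- assemble
  have hfib := hsf.hasSum.tsum_fiberwise K
  have hLHS : ∑' x, f x = ∑' k : ℕ, ∑' x : (K ⁻¹' {k} : Set _), f x := hfib.tsum_eq.symm
  show ∑' x, f x ≤ C * ∑' k, T k
  calc ∑' x, f x = ∑' k : ℕ, ∑' x : (K ⁻¹' {k} : Set _), f x := hLHS
    _ ≤ ∑' k : ℕ, C * T k :=
        Summable.tsum_le_tsum fiber_bound hfib.summable (hsum1.mul_left C)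
    _ = C * ∑' k, T k := tsum_mul_left
end
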